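/- arXiv:2503.09565 — 7 statements merged into one kernel-verified Lean document; each statement's English description precedes it below -/
import Mathlib

section
/- Let σ(x) = 1/(1 + exp(−x)) be the sigmoid function. Let m be a positive integer and a_1,…,a_m, b_1,…,b_m, c_1,…,c_m real numbers such that |b_i| ≠ |b_j| whenever i ≠ j, and such that a_k·b_k ≠ 0 for some k. Then the function f(x) = Σ_{i=1}^m a_i σ(b_i x + c_i) is not constant on ℝ; that is, there exist x, y ∈ ℝ with f(x) ≠ f(y). -/
/-- The sigmoid function. -/
noncomputable def sigmoid (x : ℝ) : ℝ := 1 / (1 + Real.exp (-x))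

/-!
Since `σ(-t) = 1 - σ(t)`, replacing `(aᵢ, bᵢ, cᵢ)` by `(-aᵢ, -bᵢ, -cᵢ)` changes the sum only by a
constant, and a term with `bᵢ = 0` is constant; so it suffices to treat a sum whose nonzero
coefficients all have positive, pairwise distinct slopes `sᵢ`. Let `s_k` be the smallest of these.
As `x → -∞`, `σ(s x + c) e^{-s_k x}` tends to `e^c` if `s = s_k` and to `0` if `s > s_k`, so the
sum times `e^{-s_k x}` tends to `a_k e^{c_k} ≠ 0`, which no constant function can do.
-/

open Filter Topology

theorem sigmoid_eq_real_sigmoid : sigmoid = Real.sigmoid := by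
  ext x
  rw [sigmoid, Real.sigmoid_def, one_div]

theorem Real.tendsto_sigmoid_mul_exp_neg_atBot {s β : ℝ} (c : ℝ) (hs : 0 < s) (hβs : β ≤ s) :
    Tendsto (fun x => Real.sigmoid (s * x + c) * Real.exp (-(β * x))) atBot
      (𝓝 (if β = s then Real.exp c else 0)) := by
  have hfactor : ∀ x, Real.sigmoid (s * x + c) * Real.exp (-(β * x))
      = Real.sigmoid (-(s * x + c)) * Real.exp ((s - β) * x + c) := by
    intro x
    rw [← Real.sigmoid_mul_rexp_neg, mul_assoc, ← Real.exp_add]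
    ring_nf
  have hsig : Tendsto (fun x => Real.sigmoid (-(s * x + c))) atBot (𝓝 1) :=
    Real.tendsto_sigmoid_atTop.comp <| tendsto_neg_atBot_atTop.comp <|
      tendsto_atBot_add_const_right _ c (tendsto_id.const_mul_atBot hs)
  have hexp : Tendsto (fun x => Real.exp ((s - β) * x + c)) atBot
      (𝓝 (if β = s then Real.exp c else 0)) := by
    split_ifs with h
    · simp [h]
    · exact Real.tendsto_exp_atBot.comp <| tendsto_atBot_add_const_right _ c <|
        tendsto_id.const_mul_atBot (sub_pos.mpr (lt_of_le_of_ne hβs h))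
  simpa only [hfactor, one_mul] using hsig.mul hexp

theorem exists_ne_of_tendsto_mul_exp_neg_atBot {f : ℝ → ℝ} {β L : ℝ} (hβ : 0 < β) (hL : L ≠ 0)
    (hf : Tendsto (fun x => f x * Real.exp (-(β * x))) atBot (𝓝 L)) : ∃ x y, f x ≠ f y := by
  by_contra! hconst
  have hexp : Tendsto (fun x => Real.exp (β * x)) atBot (𝓝 0) :=
    Real.tendsto_exp_atBot.comp (tendsto_id.const_mul_atBot hβ)
  have hf0 : Tendsto f atBot (𝓝 0) := by
    have := hf.mul hexp
    rw [mul_zero] at this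
    refine this.congr fun x => ?_
    rw [mul_assoc, ← Real.exp_add, neg_add_cancel, Real.exp_zero, mul_one]
  have hzero : f = 0 := funext fun x =>
    tendsto_nhds_unique (tendsto_const_nhds.congr fun y => hconst x y) hf0
  simp only [hzero, Pi.zero_apply, zero_mul] at hf
  exact hL (tendsto_nhds_unique hf tendsto_const_nhds)

theorem Real.exists_sum_mul_sigmoid_ne {ι : Type*} [Fintype ι] {a s : ι → ℝ} (c : ι → ℝ)
    (hs : Function.Injective s) (hpos : ∀ i, a i ≠ 0 → 0 < s i) (ha : a ≠ 0) :
    ∃ x y, ∑ i, a i * Real.sigmoid (s i * x + c i) ≠ ∑ i, a i * Real.sigmoid (s i * y + c i) := by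
  classical
  obtain ⟨k, hk, hmin⟩ := (Finset.univ.filter (a · ≠ 0)).exists_min_image s
    (Function.ne_iff.mp ha |>.imp fun i hi => Finset.mem_filter.mpr ⟨Finset.mem_univ i, hi⟩)
  have hak : a k ≠ 0 := (Finset.mem_filter.mp hk).2
  refine exists_ne_of_tendsto_mul_exp_neg_atBot (hpos k hak)
    (mul_ne_zero hak (Real.exp_pos (c k)).ne') ?_
  have hterm : ∀ i, Tendsto (fun x => a i * Real.sigmoid (s i * x + c i) * Real.exp (-(s k * x)))
      atBot (𝓝 (a i * if s k = s i then Real.exp (c i) else 0)) := by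
    intro i
    by_cases hai : a i = 0
    · simp [hai]
    · simpa only [mul_assoc] using ((Real.tendsto_sigmoid_mul_exp_neg_atBot (c i) (hpos i hai)
        (hmin i (Finset.mem_filter.mpr ⟨Finset.mem_univ i, hai⟩))).const_mul (a i))
  have hsum := tendsto_finsetSum Finset.univ fun i _ => hterm i
  simp only [hs.eq_iff, mul_ite, mul_zero, Finset.sum_ite_eq, Finset.mem_univ, if_true] at hsum
  simpa only [Finset.sum_mul] using hsum

theorem Real.mul_sigmoid_sub_sign_mul_sigmoid_abs_eq (a b c x y : ℝ) :
    a * Real.sigmoid (b * x + c) - b.sign * a * Real.sigmoid (|b| * x + b.sign * c)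
      = a * Real.sigmoid (b * y + c) - b.sign * a * Real.sigmoid (|b| * y + b.sign * c) := by
  rcases lt_trichotomy b 0 with hb | rfl | hb
  · have hflip : ∀ t, Real.sigmoid (|b| * t + -c) = 1 - Real.sigmoid (b * t + c) := fun t => by
      rw [abs_of_neg hb, ← Real.sigmoid_neg]
      ring_nf
    simp only [Real.sign_of_neg hb, neg_one_mul, hflip]
    ring
  · simp
  · simp [Real.sign_of_pos hb, abs_of_pos hb]

theorem stmt_4_general (m : ℕ) (a b c : Fin m → ℝ)
    (hb : ∀ i j, i ≠ j → |b i| ≠ |b j|)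
    (hk : ∃ k, a k * b k ≠ 0) :
    ∃ x y : ℝ,
      (∑ i, a i * sigmoid (b i * x + c i)) ≠ (∑ i, a i * sigmoid (b i * y + c i)) := by
  rw [sigmoid_eq_real_sigmoid]
  obtain ⟨k, hk⟩ := hk
  obtain ⟨x, y, hxy⟩ := Real.exists_sum_mul_sigmoid_ne (a := fun i => (b i).sign * a i)
    (s := fun i => |b i|) (fun i => (b i).sign * c i)
    (fun i j h => by_contra fun hij => hb i j hij h)
    (fun i hi => abs_pos.mpr (Real.sign_eq_zero_iff.not.mp (left_ne_zero_of_mul hi)))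
    (Function.ne_iff.mpr ⟨k, mul_ne_zero (Real.sign_eq_zero_iff.not.mpr (right_ne_zero_of_mul hk))
      (left_ne_zero_of_mul hk)⟩)
  refine ⟨x, y, fun h => hxy ?_⟩
  have hshift := Finset.sum_congr rfl fun i (_ : i ∈ Finset.univ) =>
    Real.mul_sigmoid_sub_sign_mul_sigmoid_abs_eq (a i) (b i) (c i) x y
  simp only [Finset.sum_sub_distrib] at hshift
  linarith

/-- A nontrivial finite linear combination of sigmoids with slopes of pairwise
distinct absolute values is not a constant function. -/
theorem stmt_4 (m : ℕ) (hm : 0 < m) (a b c : Fin m → ℝ)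
    (hb : ∀ i j, i ≠ j → |b i| ≠ |b j|)
    (hk : ∃ k, a k * b k ≠ 0) :
    ∃ x y : ℝ,
      (∑ i, a i * sigmoid (b i * x + c i)) ≠ (∑ i, a i * sigmoid (b i * y + c i)) :=
  stmt_4_general m a b c hb hk
end

section
/- Let σ(x) = 1/(1 + exp(−x)) be the sigmoid function. Then for all real numbers r_1, r_2, the function x ↦ (r_1 + σ(x))·(r_2 + σ'(x)), where σ'(x) = σ(x)(1 − σ(x)) is the derivative of σ, is not constant Lebesgue-almost everywhere on ℝ; that is, there is no C ∈ ℝ with (r_1 + σ(x))(r_2 + σ'(x)) = C for Lebesgue-almost every x. -/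
open MeasureTheory Polynomial

lemma sigmoid_injective : Function.Injective sigmoid := by
  intro a b hab
  unfold sigmoid at hab
  have ha : (1:ℝ) + Real.exp (-a) ≠ 0 := by positivity
  have hb : (1:ℝ) + Real.exp (-b) ≠ 0 := by positivity
  rw [div_eq_div_iff ha hb] at hab
  have : Real.exp (-a) = Real.exp (-b) := by linarith
  have := Real.exp_injective this
  linarith

lemma sigmoid_continuous : Continuous sigmoid := by
  apply Continuous.div continuous_const
  · exact continuous_const.add (Real.continuous_exp.comp continuous_neg)
  · intro x; positivity

/-- For all reals `r₁ r₂`, the function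
`x ↦ (r₁ + σ x) * (r₂ + σ' x)` with `σ' x = σ x * (1 - σ x)` is not constant
Lebesgue-almost everywhere. -/
theorem stmt_5 (r₁ r₂ : ℝ) :
    ¬ ∃ C : ℝ, ∀ᵐ x : ℝ ∂(volume : Measure ℝ),
      (r₁ + sigmoid x) * (r₂ + sigmoid x * (1 - sigmoid x)) = C := by
  rintro ⟨C, hC⟩
  have hcont : Continuous fun x : ℝ =>
      (r₁ + sigmoid x) * (r₂ + sigmoid x * (1 - sigmoid x)) := by
    have h := sigmoid_continuous
    continuity
  have heq : (fun x : ℝ => (r₁ + sigmoid x) * (r₂ + sigmoid x * (1 - sigmoid x)))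
      = fun _ => C := by
    rw [← Continuous.ae_eq_iff_eq (volume : Measure ℝ) hcont continuous_const]
    exact hC
  set p : ℝ[X] := -X^3 + Polynomial.C (1 - r₁) * X^2 + Polynomial.C (r₁ + r₂) * X
      + Polynomial.C (r₁ * r₂ - C) with hp
  have hroot : ∀ x : ℝ, p.IsRoot (sigmoid x) := by
    intro x
    have hx := congrFun heq x
    simp only [IsRoot, hp]
    simp only [eval_add, eval_neg, eval_pow, eval_mul, eval_C, eval_X]
    nlinarith [hx]
  have hinf : {x : ℝ | p.IsRoot x}.Infinite := by
    exact (Set.infinite_range_of_injective sigmoid_injective).mono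
      (by rintro _ ⟨x, rfl⟩; exact hroot x)
  have hp0 : p = 0 := eq_zero_of_infinite_isRoot p hinf
  have h3 : p.coeff 3 = -1 := by
    simp [hp, coeff_add, coeff_sub, sub_mul, one_mul, coeff_neg, coeff_C_mul, coeff_X_pow, coeff_C, coeff_X]
  rw [hp0] at h3
  simp at h3
end

section
/- Let tanh denote the hyperbolic tangent function. Let m be a positive integer and a_1,…,a_m, b_1,…,b_m, c_1,…,c_m real numbers such that |b_i| ≠ |b_j| whenever i ≠ j, and such that a_k·b_k ≠ 0 for some k. Then the function f(x) = Σ_{i=1}^m a_i tanh(b_i x + c_i) is not constant on ℝ; that is, there exist x, y ∈ ℝ with f(x) ≠ f(y). -/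
open Real Filter Topology

lemma my_tanh_eq (t : ℝ) : Real.tanh t = (Real.exp (2*t) - 1) / (Real.exp (2*t) + 1) := by
  rw [Real.tanh_eq_sinh_div_cosh, Real.sinh_eq, Real.cosh_eq]
  rw [show (2:ℝ)*t = t + t by ring, Real.exp_add]
  have h := Real.exp_pos t
  rw [Real.exp_neg t]
  rw [div_eq_div_iff (by positivity) (by positivity)]
  field_simp

lemma my_tanh_sub_one (t : ℝ) : Real.tanh t - 1 = -2 / (Real.exp (2*t) + 1) := by
  rw [my_tanh_eq]
  have h : Real.exp (2*t) + 1 > 0 := by positivity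
  field_simp
  ring

lemma my_tanh_add_one (t : ℝ) : Real.tanh t + 1 = 2 * Real.exp (2*t) / (Real.exp (2*t) + 1) := by
  rw [my_tanh_eq]
  have h : Real.exp (2*t) + 1 > 0 := by positivity
  field_simp
  ring

lemma exp_lin_atTop {r : ℝ} (hr : 0 < r) (c : ℝ) :
    Tendsto (fun x => Real.exp (r * x + c)) atTop atTop :=
  Real.tendsto_exp_atTop.comp (tendsto_atTop_add_const_right _ c (tendsto_id.const_mul_atTop hr))

lemma key_eq (β r c x : ℝ) :
    Real.exp (β * x) / (Real.exp (r * x + c) + 1)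
      = (Real.exp ((r - β) * x + c) + Real.exp (-β * x))⁻¹ := by
  have h1 : Real.exp (r * x + c) + 1 = Real.exp (β * x) * (Real.exp ((r - β) * x + c) + Real.exp (-β * x)) := by
    rw [mul_add, ← Real.exp_add, ← Real.exp_add]
    ring_nf
    simp [add_comm]
  rw [h1, div_mul_cancel_left₀ (Real.exp_ne_zero _)]

lemma lim_zero {β r : ℝ} (h : β < r) (c : ℝ) :
    Tendsto (fun x => Real.exp (β * x) / (Real.exp (r * x + c) + 1)) atTop (nhds 0) := by
  simp only [key_eq]
  apply Filter.Tendsto.inv_tendsto_atTop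
  apply tendsto_atTop_mono (fun x => le_add_of_nonneg_right (Real.exp_pos _).le)
  exact exp_lin_atTop (by linarith) c

lemma lim_exact {β : ℝ} (hβ : 0 < β) (c : ℝ) :
    Tendsto (fun x => Real.exp (β * x) / (Real.exp (β * x + c) + 1)) atTop (nhds (Real.exp (-c))) := by
  simp only [key_eq, sub_self, zero_mul, zero_add]
  have h2 : Tendsto (fun x : ℝ => Real.exp (-β * x)) atTop (nhds 0) := by
    simp only [neg_mul, Real.exp_neg]
    exact Filter.Tendsto.inv_tendsto_atTop (Real.tendsto_exp_atTop.comp (tendsto_id.const_mul_atTop hβ))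
  have h3 : Tendsto (fun x : ℝ => Real.exp c + Real.exp (-β * x)) atTop (nhds (Real.exp c)) := by
    simpa using tendsto_const_nhds.add h2
  have h4 := h3.inv₀ (by positivity)
  rw [← Real.exp_neg] at h4
  exact h4

noncomputable def S (b c : ℝ) : ℝ := if 0 < b then 1 else if b < 0 then -1 else Real.tanh c

lemma inv_lin_zero {r : ℝ} (hr : 0 < r) (c : ℝ) :
    Tendsto (fun x => (Real.exp (r * x + c) + 1)⁻¹) atTop (nhds 0) := by
  apply Filter.Tendsto.inv_tendsto_atTop
  apply tendsto_atTop_mono (fun x => le_add_of_nonneg_right (by norm_num : (0:ℝ) ≤ 1))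
  exact exp_lin_atTop hr c

lemma tanh_term_tendsto (a b c : ℝ) :
    Tendsto (fun x => a * Real.tanh (b * x + c)) atTop (nhds (a * S b c)) := by
  rcases lt_trichotomy b 0 with hb | hb | hb
  · have hS : S b c = -1 := by simp [S, hb, not_lt.mpr hb.le]
    rw [hS]
    have key : ∀ x : ℝ, a * Real.tanh (b * x + c)
        = a * (-1) + (2 * a) * (Real.exp ((-2*b) * x + (-2*c)) + 1)⁻¹ := by
      intro x
      have := my_tanh_add_one (b * x + c)
      have h2 : Real.tanh (b * x + c) = -1 + 2 * Real.exp (2*(b*x+c)) / (Real.exp (2*(b*x+c)) + 1) := by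
        linarith
      rw [h2]
      have hE : Real.exp ((-2*b) * x + (-2*c)) = (Real.exp (2*(b*x+c)))⁻¹ := by
        rw [← Real.exp_neg]; ring_nf
      rw [hE]
      have hE0 : (0:ℝ) < Real.exp (2*(b*x+c)) := Real.exp_pos _
      field_simp
      ring
    simp only [key]
    have := (inv_lin_zero (r := -2*b) (by linarith) (-2*c)).const_mul (2*a)
    simpa using tendsto_const_nhds.add this
  · subst hb
    simp only [zero_mul, zero_add, S, lt_irrefl, if_false]
    exact tendsto_const_nhds
  · have hS : S b c = 1 := by simp [S, hb]
    rw [hS]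
    have key : ∀ x : ℝ, a * Real.tanh (b * x + c)
        = a * 1 + (-2 * a) * (Real.exp ((2*b) * x + (2*c)) + 1)⁻¹ := by
      intro x
      have := my_tanh_sub_one (b * x + c)
      have h2 : Real.tanh (b * x + c) = 1 + (-2) / (Real.exp (2*(b*x+c)) + 1) := by
        linarith
      rw [h2]
      have h3 : (2:ℝ)*(b*x+c) = (2*b)*x + 2*c := by ring
      rw [h3]
      field_simp
    simp only [key]
    have := (inv_lin_zero (r := 2*b) (by linarith) (2*c)).const_mul (-2*a)
    simpa using tendsto_const_nhds.add this

lemma wkey_pos (a b c β x : ℝ) :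
    Real.exp (2*β*x) * (a * Real.tanh (b*x+c) - a * 1)
      = (-2*a) * (Real.exp ((2*β)*x) / (Real.exp ((2*b)*x + 2*c) + 1)) := by
  rw [show a * Real.tanh (b*x+c) - a*1 = a * (Real.tanh (b*x+c) - 1) by ring, my_tanh_sub_one]
  rw [show (2:ℝ)*(b*x+c) = (2*b)*x+2*c by ring]
  ring

lemma wkey_neg (a b c β x : ℝ) :
    Real.exp (2*β*x) * (a * Real.tanh (b*x+c) - a * (-1))
      = (2*a) * (Real.exp ((2*β)*x) / (Real.exp ((-2*b)*x + (-2*c)) + 1)) := by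
  rw [show a * Real.tanh (b*x+c) - a*(-1) = a * (Real.tanh (b*x+c) + 1) by ring, my_tanh_add_one]
  have hE : Real.exp ((-2*b) * x + (-2*c)) = (Real.exp (2*(b*x+c)))⁻¹ := by
    rw [← Real.exp_neg]; ring_nf
  rw [hE]
  have hE0 : (0:ℝ) < Real.exp (2*(b*x+c)) := Real.exp_pos _
  field_simp
  ring

lemma wterm_small (a b c β : ℝ) (hβ : 0 < β) (h : a * b = 0 ∨ β < |b|) :
    Tendsto (fun x => Real.exp (2*β*x) * (a * Real.tanh (b*x+c) - a * S b c)) atTop (nhds 0) := by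
  rcases h with h | h
  · rcases mul_eq_zero.mp h with h | h
    · simp [h]
    · subst h
      simp only [S, lt_irrefl, if_false, zero_mul, zero_add, sub_self, mul_zero]
      simpa using tendsto_const_nhds (α := ℝ) (f := atTop) (a := (0:ℝ))
  · rcases lt_trichotomy b 0 with hb | hb | hb
    · have hS : S b c = -1 := by simp [S, hb, not_lt.mpr hb.le]
      simp only [hS, wkey_neg]
      have habs : |b| = -b := abs_of_neg hb
      have := (lim_zero (β := 2*β) (r := -2*b) (by rw [habs] at h; linarith) (-2*c)).const_mul (2*a)
      simpa using this
    · simp [hb, abs_zero] at h; linarith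
    · have hS : S b c = 1 := by simp [S, hb]
      simp only [hS, wkey_pos]
      have habs : |b| = b := abs_of_pos hb
      have := (lim_zero (β := 2*β) (r := 2*b) (by rw [habs] at h; linarith) (2*c)).const_mul (-2*a)
      simpa using this

lemma wterm_main (a b c β : ℝ) (hβ : 0 < β) (hβb : β = |b|) (hb : b ≠ 0) :
    Tendsto (fun x => Real.exp (2*β*x) * (a * Real.tanh (b*x+c) - a * S b c)) atTop
      (nhds (if 0 < b then -2*a*Real.exp (-(2*c)) else 2*a*Real.exp (2*c))) := by
  rcases lt_trichotomy b 0 with hbneg | h0 | hbpos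
  · have hS : S b c = -1 := by simp [S, hbneg, not_lt.mpr hbneg.le]
    have hβ' : 2*β = -2*b := by rw [hβb, abs_of_neg hbneg]; ring
    simp only [hS, wkey_neg, if_neg (not_lt.mpr hbneg.le)]
    have := (lim_exact (β := 2*β) (by linarith) (-2*c)).const_mul (2*a)
    rw [show -(-2*c) = 2*c by ring] at this
    simpa [hβ'] using this
  · exact absurd h0 hb
  · have hS : S b c = 1 := by simp [S, hbpos]
    have hβ' : 2*β = 2*b := by rw [hβb, abs_of_pos hbpos]
    simp only [hS, wkey_pos, if_pos hbpos]
    have := (lim_exact (β := 2*β) (by linarith) (2*c)).const_mul (-2*a)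
    rw [show (-(2*c)) = -2*c by ring]
    simpa [hβ'] using this

/-- A nontrivial finite linear combination of hyperbolic tangents with slopes of
pairwise distinct absolute values is not a constant function. -/
theorem stmt_6 (m : ℕ) (hm : 0 < m) (a b c : Fin m → ℝ)
    (hb : ∀ i j, i ≠ j → |b i| ≠ |b j|)
    (hk : ∃ k, a k * b k ≠ 0) :
    ∃ x y : ℝ,
      (∑ i, a i * Real.tanh (b i * x + c i)) ≠ (∑ i, a i * Real.tanh (b i * y + c i)) := by
  by_contra hcon
  push_neg at hcon
  set F : ℝ → ℝ := fun x => ∑ i, a i * Real.tanh (b i * x + c i) with hF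
  have hconst : ∀ x, F x = F 0 := fun x => hcon x 0
  set L : ℝ := ∑ i, a i * S (b i) (c i) with hL
  have hFL : Tendsto F atTop (nhds L) := by
    apply tendsto_finset_sum
    intro i _
    exact tanh_term_tendsto (a i) (b i) (c i)
  have hF0L : F 0 = L := by
    have h2 : Tendsto F atTop (nhds (F 0)) := by
      rw [show F = fun _ => F 0 from funext hconst]
      exact tendsto_const_nhds
    exact tendsto_nhds_unique h2 hFL
  -- pick minimal |b| among nontrivial terms
  obtain ⟨k, hk⟩ := hk
  set Sf : Finset (Fin m) := Finset.univ.filter (fun i => a i * b i ≠ 0) with hSf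
  have hkmem : k ∈ Sf := by simp only [hSf, Finset.mem_filter, Finset.mem_univ, true_and]; exact hk
  obtain ⟨i0, hi0mem, hmin⟩ := Sf.exists_min_image (fun i => |b i|) ⟨k, hkmem⟩
  have hai0 : a i0 ≠ 0 := by
    have := (Finset.mem_filter.mp hi0mem).2
    exact fun h => this (by rw [h, zero_mul])
  have hbi0 : b i0 ≠ 0 := by
    have := (Finset.mem_filter.mp hi0mem).2
    exact fun h => this (by rw [h, mul_zero])
  set β : ℝ := |b i0| with hβdef
  have hβ : 0 < β := abs_pos.mpr hbi0
  set L0 : ℝ := if 0 < b i0 then -2*(a i0)*Real.exp (-(2*(c i0))) else 2*(a i0)*Real.exp (2*(c i0)) with hL0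
  have hL0ne : L0 ≠ 0 := by
    rw [hL0]
    split_ifs
    · have := Real.exp_pos (-(2*(c i0)))
      intro h; apply hai0
      nlinarith [Real.exp_pos (-(2*(c i0)))]
    · intro h; apply hai0
      nlinarith [Real.exp_pos (2*(c i0))]
  have hsum : Tendsto (fun x => ∑ i, Real.exp (2*β*x) * (a i * Real.tanh (b i * x + c i) - a i * S (b i) (c i)))
      atTop (nhds L0) := by
    have : L0 = ∑ i, if i = i0 then L0 else 0 := by simp
    rw [this]
    apply tendsto_finset_sum
    intro i _
    by_cases hi : i = i0
    · subst hi
      simp only [if_pos rfl]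
      exact wterm_main (a i) (b i) (c i) β hβ rfl hbi0
    · simp only [if_neg hi]
      apply wterm_small (a i) (b i) (c i) β hβ
      by_cases hab : a i * b i = 0
      · exact Or.inl hab
      · right
        have hmem : i ∈ Sf := by simp only [hSf, Finset.mem_filter, Finset.mem_univ, true_and]; exact hab
        have h1 : β ≤ |b i| := hmin i hmem
        have h2 : |b i| ≠ β := hb i i0 hi
        exact lt_of_le_of_ne h1 (Ne.symm h2)
  have hzero : (fun x => ∑ i, Real.exp (2*β*x) * (a i * Real.tanh (b i * x + c i) - a i * S (b i) (c i)))
      = fun _ => (0:ℝ) := by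
    funext x
    have : ∑ i, Real.exp (2*β*x) * (a i * Real.tanh (b i * x + c i) - a i * S (b i) (c i))
        = Real.exp (2*β*x) * (F x - L) := by
      rw [hF, hL, ← Finset.sum_sub_distrib, Finset.mul_sum]
    rw [this, hconst x, hF0L, sub_self, mul_zero]
  rw [hzero] at hsum
  exact hL0ne (tendsto_nhds_unique hsum tendsto_const_nhds)
end

section
/- Let tanh denote the hyperbolic tangent function. Then for all real numbers r_1, r_2, the function x ↦ (r_1 + tanh(x))·(r_2 + tanh'(x)), where tanh'(x) = 1 − tanh(x)² is the derivative of tanh, is not constant Lebesgue-almost everywhere on ℝ; that is, there is no C ∈ ℝ with (r_1 + tanh(x))(r_2 + tanh'(x)) = C for Lebesgue-almost every x. -/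
open MeasureTheory

lemma tanh_lt_tanh' {x y : ℝ} (h : x < y) : Real.tanh x < Real.tanh y := by
  rw [Real.tanh_eq_sinh_div_cosh, Real.tanh_eq_sinh_div_cosh,
    div_lt_div_iff₀ (Real.cosh_pos x) (Real.cosh_pos y)]
  have hs : Real.sinh (x - y) < 0 := Real.sinh_neg_iff.2 (by linarith)
  rw [Real.sinh_sub] at hs
  linarith

lemma tanh_lt_one' (x : ℝ) : Real.tanh x < 1 := by
  rw [Real.tanh_eq_sinh_div_cosh, div_lt_one (Real.cosh_pos x)]
  exact Real.sinh_lt_cosh x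

/-- For all reals `r₁ r₂`, the function
`x ↦ (r₁ + tanh x) * (r₂ + (1 - tanh x ^ 2))` is not constant Lebesgue-almost everywhere. -/
theorem stmt_7 (r₁ r₂ : ℝ) :
    ¬ ∃ C : ℝ, ∀ᵐ x : ℝ ∂(volume : Measure ℝ),
      (r₁ + Real.tanh x) * (r₂ + (1 - Real.tanh x ^ 2)) = C := by
  rintro ⟨C, hC⟩
  have hcont : Continuous fun x : ℝ => (r₁ + Real.tanh x) * (r₂ + (1 - Real.tanh x ^ 2)) := by
    have htanh : Continuous Real.tanh := by
      have : Real.tanh = fun x => Real.sinh x / Real.cosh x := by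
        funext x; exact Real.tanh_eq_sinh_div_cosh x
      rw [this]
      exact Real.continuous_sinh.div Real.continuous_cosh fun x => (Real.cosh_pos x).ne'
    fun_prop
  have heq : (fun x : ℝ => (r₁ + Real.tanh x) * (r₂ + (1 - Real.tanh x ^ 2)))
      = fun _ => C :=
    (hcont.ae_eq_iff_eq volume continuous_const).1 hC
  have h0 := congrFun heq 0
  have h1 := congrFun heq 1
  have hm1 := congrFun heq (-1)
  have h2 := congrFun heq 2
  simp only [Real.tanh_zero] at h0
  rw [show ((-1 : ℝ)) = -(1:ℝ) by ring, Real.tanh_neg] at hm1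
  set a := Real.tanh 1 with ha
  set b := Real.tanh 2 with hb
  have ha0 : 0 < a := by simpa using tanh_lt_tanh' (show (0:ℝ) < 1 by norm_num)
  have hab : a < b := tanh_lt_tanh' (by norm_num)
  have hb1 : b < 1 := tanh_lt_one' 2
  -- From h1 and hm1: 2a(r₂+1-a²)=0, so r₂+1 = a², C = 0; from h0: r₁ a² = 0 so r₁ = 0;
  -- then h2: b(a²-b²)=0, contradiction.
  have key : r₂ + 1 - a ^ 2 = 0 := by nlinarith [h1, hm1]
  have hC0 : C = 0 := by
    have hz : r₂ + (1 - a ^ 2) = 0 := by linarith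
    rw [← h1, hz, mul_zero]
  have h0' : r₁ * a ^ 2 = 0 := by linear_combination h0 - r₁ * key + hC0
  have hr1 : r₁ = 0 := by
    have hane : a ^ 2 ≠ 0 := by positivity
    exact (mul_eq_zero.1 h0').resolve_right hane
  subst hr1
  rw [hC0] at h2
  have hfin : b * (a ^ 2 - b ^ 2) = 0 := by linear_combination h2 - b * key
  nlinarith [hfin, mul_pos ha0 (sub_pos.2 hab), sq_nonneg (a - b), sq_nonneg (a + b)]
end

section
/- Let SiLU(x) = x·σ(x), where σ(x) = 1/(1 + exp(−x)) is the sigmoid function. Let m be a positive integer and a_1,…,a_m, b_1,…,b_m, c_1,…,c_m real numbers such that |b_i| ≠ |b_j| whenever i ≠ j, and such that a_k·b_k ≠ 0 for some k. Then the function f(x) = Σ_{i=1}^m a_i SiLU(b_i x + c_i) is not constant on ℝ; that is, there exist x, y ∈ ℝ with f(x) ≠ f(y). -/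
/-- The SiLU (Sigmoid Linear Unit) function. -/
noncomputable def silu (x : ℝ) : ℝ := x * sigmoid x

open Filter Topology Finset

lemma sigmoid_eq_exp_div (x : ℝ) : sigmoid x = Real.exp x / (Real.exp x + 1) := by
  rw [sigmoid, Real.exp_neg]
  field_simp

lemma silu_eq_silu_neg_add (x : ℝ) : silu x = silu (-x) + x := by
  simp only [silu, sigmoid_eq_exp_div, Real.exp_neg]
  field_simp
  ring

lemma silu_mul_add_eq_silu_abs_mul_add (b c x : ℝ) :
    silu (b * x + c) =
      silu (|b| * x + if b < 0 then -c else c) + if b < 0 then b * x + c else 0 := by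
  split_ifs with hb
  · rw [abs_of_neg hb, silu_eq_silu_neg_add (b * x + c)]
    ring_nf
  · rw [abs_of_nonneg (not_lt.1 hb), add_zero]

lemma tendsto_mul_exp_atBot : Tendsto (fun x : ℝ => x * Real.exp x) atBot (𝓝 0) := by
  simpa [Function.comp_def] using
    ((Real.tendsto_pow_mul_exp_neg_atTop_nhds_zero 1).comp tendsto_neg_atBot_atTop).neg

lemma tendsto_silu_atBot : Tendsto silu atBot (𝓝 0) := by
  have hden : Tendsto (fun x => Real.exp x + 1) atBot (𝓝 1) := by
    simpa using Real.tendsto_exp_atBot.add_const 1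
  have h := tendsto_mul_exp_atBot.div hden one_ne_zero
  rw [zero_div] at h
  refine h.congr fun x => ?_
  simp only [Pi.div_apply, silu, sigmoid_eq_exp_div, mul_div_assoc]

lemma tendsto_mul_add_atBot {b : ℝ} (hb : 0 < b) (c : ℝ) :
    Tendsto (fun x => b * x + c) atBot atBot :=
  tendsto_atBot_add_const_right _ c ((tendsto_const_mul_atBot_of_pos hb).2 tendsto_id)

lemma tendsto_sum_silu_atBot {ι : Type*} (s : Finset ι) (a b c : ι → ℝ)
    (hb : ∀ i ∈ s, 0 < b i) :
    Tendsto (fun x => ∑ i ∈ s, a i * silu (b i * x + c i)) atBot (𝓝 0) := by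
  simpa using tendsto_finsetSum s fun i hi =>
    (tendsto_silu_atBot.comp (tendsto_mul_add_atBot (hb i hi) (c i))).const_mul (a i)

lemma tendsto_silu_mul_exp_div_atBot {b β c L : ℝ} (hb : 0 < b)
    (hL : Tendsto (fun x => Real.exp ((b - β) * x)) atBot (𝓝 L)) :
    Tendsto (fun x => silu (b * x + c) * Real.exp (-(β * x)) / x) atBot
      (𝓝 (b * (Real.exp c * L))) := by
  have hden : Tendsto (fun x => Real.exp (b * x + c) + 1) atBot (𝓝 1) := by
    simpa using (Real.tendsto_exp_atBot.comp (tendsto_mul_add_atBot hb c)).add_const 1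
  have hslope : Tendsto (fun x : ℝ => b + c * x⁻¹) atBot (𝓝 b) := by
    simpa using (tendsto_inv_atBot_zero.const_mul c).const_add b
  have key := hslope.mul ((hL.const_mul (Real.exp c)).div hden one_ne_zero)
  rw [div_one] at key
  simp only [Pi.div_apply] at key
  refine key.congr' ?_
  filter_upwards [eventually_lt_atBot 0] with x hx
  have hexp : Real.exp (b * x + c) = Real.exp c * Real.exp ((b - β) * x) * Real.exp (β * x) := by
    rw [← Real.exp_add, ← Real.exp_add]
    ring_nf
  rw [silu, sigmoid_eq_exp_div, hexp, Real.exp_neg]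
  field_simp [hx.ne]

lemma eq_zero_of_tendsto_atBot_of_eq_mul_add {g : ℝ → ℝ} {p q : ℝ}
    (hg : Tendsto g atBot (𝓝 0)) (h : ∀ x, g x = p * x + q) (x : ℝ) : g x = 0 := by
  have hp : p = 0 := by
    have hshift : Tendsto (fun x => g (x + 1) - g x) atBot (𝓝 0) := by
      simpa using (hg.comp (tendsto_atBot_add_const_right _ 1 tendsto_id)).sub hg
    refine tendsto_nhds_unique tendsto_const_nhds (hshift.congr fun x => ?_)
    rw [h, h]
    ring
  have hq : q = 0 := by
    refine tendsto_nhds_unique tendsto_const_nhds (hg.congr fun x => ?_)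
    rw [h, hp, zero_mul, zero_add]
  rw [h, hp, hq, zero_mul, add_zero]

lemma eq_zero_of_sum_silu_eq_zero {ι : Type*} [DecidableEq ι] (s : Finset ι) (a b c : ι → ℝ)
    (hb : ∀ i ∈ s, 0 < b i) (hinj : Set.InjOn b s)
    (h : ∀ x, ∑ i ∈ s, a i * silu (b i * x + c i) = 0) : ∀ i ∈ s, a i = 0 := by
  induction s using Finset.induction_on_min_value b with
  | empty => simp
  | insert i₀ s hi₀ hmin ih =>
    have hb' : ∀ i ∈ s, 0 < b i := fun i hi => hb i (mem_insert_of_mem hi)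
    have hlt : ∀ i ∈ s, b i₀ < b i := fun i hi => (hmin i hi).lt_of_ne fun he =>
      hi₀ (hinj (mem_insert_self i₀ s) (mem_insert_of_mem hi) he ▸ hi)
    have hlim : Tendsto (fun x => a i₀ * (silu (b i₀ * x + c i₀) * Real.exp (-(b i₀ * x)) / x)
        + ∑ i ∈ s, a i * (silu (b i * x + c i) * Real.exp (-(b i₀ * x)) / x)) atBot
        (𝓝 (a i₀ * (b i₀ * (Real.exp (c i₀) * 1)) +
          ∑ i ∈ s, a i * (b i * (Real.exp (c i) * 0)))) := by
      refine ((tendsto_silu_mul_exp_div_atBot (hb i₀ (mem_insert_self i₀ s)) ?_).const_mul _).add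
        (tendsto_finsetSum s fun i hi =>
          (tendsto_silu_mul_exp_div_atBot (hb' i hi) ?_).const_mul (a i))
      · simp only [sub_self, zero_mul, Real.exp_zero]
        exact tendsto_const_nhds
      · exact Real.tendsto_exp_atBot.comp
          ((tendsto_const_mul_atBot_of_pos (sub_pos.2 (hlt i hi))).2 tendsto_id)
    have hzero : ∀ x, a i₀ * (silu (b i₀ * x + c i₀) * Real.exp (-(b i₀ * x)) / x)
        + ∑ i ∈ s, a i * (silu (b i * x + c i) * Real.exp (-(b i₀ * x)) / x) = 0 := by
      intro x
      have := h x
      rw [sum_insert hi₀] at this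
      simp only [← mul_div_assoc, ← mul_assoc, ← sum_div, ← sum_mul, ← add_div, ← add_mul, this,
        zero_mul, zero_div]
    have hai₀ : a i₀ = 0 := by
      have := tendsto_nhds_unique hlim (tendsto_const_nhds.congr fun x => (hzero x).symm)
      simp only [mul_zero, sum_const_zero, add_zero, mul_one] at this
      exact (mul_eq_zero.1 this).resolve_right
        (mul_ne_zero (hb i₀ (mem_insert_self i₀ s)).ne' (Real.exp_pos _).ne')
    intro i hi
    rcases mem_insert.1 hi with rfl | hi
    · exact hai₀
    · refine ih hb' (hinj.mono (by simp)) (fun x => ?_) i hi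
      simpa [sum_insert hi₀, hai₀] using h x

lemma exists_sum_silu_eq_sum_silu_abs_add_affine {ι : Type*} [Fintype ι] (a b c : ι → ℝ) :
    ∃ (c' : ι → ℝ) (p q : ℝ), ∀ x, ∑ i, a i * silu (b i * x + c i) =
      ∑ i with b i ≠ 0, a i * silu (|b i| * x + c' i) + (p * x + q) := by
  refine ⟨fun i => if b i < 0 then -c i else c i, ∑ i, a i * if b i < 0 then b i else 0,
    ∑ i, (a i * (if b i < 0 then c i else 0)) + ∑ i with b i = 0, a i * silu (c i), fun x => ?_⟩
  simp only [silu_mul_add_eq_silu_abs_mul_add (b _) (c _) x, mul_add, sum_add_distrib]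
  rw [← sum_filter_add_sum_filter_not univ (fun i => b i ≠ 0)]
  have hconst : ∑ i with ¬b i ≠ 0, a i * silu (|b i| * x + if b i < 0 then -c i else c i) =
      ∑ i with b i = 0, a i * silu (c i) := by
    simp only [not_not]
    refine sum_congr rfl fun i hi => ?_
    simp [(mem_filter.1 hi).2]
  have haffine : ∑ i, a i * (if b i < 0 then b i * x + c i else 0) =
      (∑ i, a i * if b i < 0 then b i else 0) * x + ∑ i, a i * if b i < 0 then c i else 0 := by
    rw [sum_mul, ← sum_add_distrib]
    refine sum_congr rfl fun i _ => ?_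
    split_ifs <;> ring
  rw [hconst, haffine]
  ring

theorem stmt_8_general (m : ℕ) (a b c : Fin m → ℝ)
    (hb : ∀ i j, i ≠ j → |b i| ≠ |b j|)
    (hk : ∃ k, a k * b k ≠ 0) :
    ∃ x y : ℝ,
      (∑ i, a i * silu (b i * x + c i)) ≠ (∑ i, a i * silu (b i * y + c i)) := by
  by_contra! hconst
  obtain ⟨k, hk⟩ := hk
  obtain ⟨c', p, q, hf⟩ := exists_sum_silu_eq_sum_silu_abs_add_affine a b c
  set g := fun x => ∑ i with b i ≠ 0, a i * silu (|b i| * x + c' i)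
  have hpos : ∀ i ∈ ({i | b i ≠ 0} : Finset (Fin m)), 0 < |b i| := by simp
  have hg : ∀ x, g x = 0 := eq_zero_of_tendsto_atBot_of_eq_mul_add (p := -p) (q := g 0)
    (tendsto_sum_silu_atBot _ a _ c' hpos) fun x => by
      have := hconst x 0
      rw [hf, hf] at this
      linarith
  have hinj : Set.InjOn (fun i => |b i|) ({i | b i ≠ 0} : Finset (Fin m)) :=
    fun i _ j _ hij => by_contra fun hne => hb i j hne hij
  have hak : a k = 0 := eq_zero_of_sum_silu_eq_zero _ a _ c' hpos hinj hg k
    (by simpa using right_ne_zero_of_mul hk)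
  simp [hak] at hk

/-- A nontrivial finite linear combination of SiLUs with slopes of pairwise
distinct absolute values is not a constant function. -/
theorem stmt_8 (m : ℕ) (hm : 0 < m) (a b c : Fin m → ℝ)
    (hb : ∀ i j, i ≠ j → |b i| ≠ |b j|)
    (hk : ∃ k, a k * b k ≠ 0) :
    ∃ x y : ℝ,
      (∑ i, a i * silu (b i * x + c i)) ≠ (∑ i, a i * silu (b i * y + c i)) :=
  stmt_8_general m a b c hb hk
end

section
/- Let Φ(x) denote the cumulative distribution function of the standard Gaussian distribution N(0,1), and let GeLU(x) = x·Φ(x). Let m be a positive integer and a_1,…,a_m, b_1,…,b_m, c_1,…,c_m real numbers such that |b_i| ≠ |b_j| whenever i ≠ j, and such that a_k·b_k ≠ 0 for some k. Then the function f(x) = Σ_{i=1}^m a_i GeLU(b_i x + c_i) is not constant on ℝ; that is, there exist x, y ∈ ℝ with f(x) ≠ f(y). -/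
/-- The cumulative distribution function of the standard Gaussian distribution,
`Φ x = ∫_{-∞}^x (2π)^{-1/2} exp (-t²/2) dt`. -/
noncomputable def stdGaussCDF (x : ℝ) : ℝ :=
  ∫ t in Set.Iic x, (Real.sqrt (2 * Real.pi))⁻¹ * Real.exp (-t ^ 2 / 2)

/-- The GeLU function `GeLU x = x * Φ x`. -/
noncomputable def gelu (x : ℝ) : ℝ := x * stdGaussCDF x

/-!
If `F x = ∑ aᵢ GeLU (bᵢ x + cᵢ)` were constant, then `F'' x = ∑ aᵢ bᵢ² (2 - yᵢ²) φ(yᵢ)` with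
`yᵢ = bᵢ x + cᵢ` would vanish identically, where `φ = Φ'` is the Gaussian density. Let `j` minimise
`|bᵢ|` among the indices with `aᵢ bᵢ ≠ 0`. Since `φ(yᵢ) / φ(yⱼ)` decays like `exp (-ε x²)` when
`|bᵢ| > |bⱼ|`, all other terms are `o(φ(yⱼ))` as `x → ∞`, whereas the `j`-th term is
`aⱼ bⱼ² (2 - yⱼ²) φ(yⱼ)` with `2 - yⱼ² → -∞`.
-/

open Real MeasureTheory Filter Topology Set Asymptotics

noncomputable def stdGaussPDF (t : ℝ) : ℝ := (√(2 * π))⁻¹ * exp (-t ^ 2 / 2)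

lemma stdGaussPDF_pos (t : ℝ) : 0 < stdGaussPDF t := by
  unfold stdGaussPDF; positivity

lemma continuous_stdGaussPDF : Continuous stdGaussPDF := by
  unfold stdGaussPDF; fun_prop

lemma integrable_stdGaussPDF : Integrable stdGaussPDF := by
  have h := (integrable_exp_neg_mul_sq (b := 1 / 2) (by norm_num)).const_mul (√(2 * π))⁻¹
  convert h using 3 with t
  rw [stdGaussPDF]
  ring_nf

lemma stdGaussPDF_div_stdGaussPDF (s t : ℝ) :
    stdGaussPDF s / stdGaussPDF t = exp ((t ^ 2 - s ^ 2) / 2) := by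
  rw [stdGaussPDF, stdGaussPDF, mul_div_mul_left _ _ (by positivity), ← exp_sub]
  ring_nf

lemma hasDerivAt_stdGaussCDF (x : ℝ) : HasDerivAt stdGaussCDF (stdGaussPDF x) x := by
  have hsplit : ∀ y, stdGaussCDF y = (∫ t in Iic 0, stdGaussPDF t) + ∫ t in 0..y, stdGaussPDF t :=
    fun y => by
      rw [← intervalIntegral.integral_Iic_sub_Iic integrable_stdGaussPDF.integrableOn
        integrable_stdGaussPDF.integrableOn, add_sub_cancel]
      rfl
  rw [funext hsplit]
  exact (intervalIntegral.integral_hasDerivAt_right integrable_stdGaussPDF.intervalIntegrable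
    (continuous_stdGaussPDF.stronglyMeasurableAtFilter _ _)
    continuous_stdGaussPDF.continuousAt).const_add _

lemma hasDerivAt_stdGaussPDF (x : ℝ) : HasDerivAt stdGaussPDF (-x * stdGaussPDF x) x := by
  have h := ((((hasDerivAt_pow 2 x).neg).div_const 2).exp).const_mul (√(2 * π))⁻¹
  refine h.congr_deriv ?_
  simp only [stdGaussPDF, Pi.neg_apply]
  ring

noncomputable def geluDeriv (y : ℝ) : ℝ := stdGaussCDF y + y * stdGaussPDF y

noncomputable def geluDeriv2 (y : ℝ) : ℝ := (2 - y ^ 2) * stdGaussPDF y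

lemma hasDerivAt_gelu (x : ℝ) : HasDerivAt gelu (geluDeriv x) x :=
  ((hasDerivAt_id x).mul (hasDerivAt_stdGaussCDF x)).congr_deriv (by simp [geluDeriv])

lemma hasDerivAt_geluDeriv (x : ℝ) : HasDerivAt geluDeriv (geluDeriv2 x) x :=
  ((hasDerivAt_stdGaussCDF x).add ((hasDerivAt_id x).mul (hasDerivAt_stdGaussPDF x))).congr_deriv
    (by simp only [geluDeriv2, id]; ring)

lemma hasDerivAt_sum_comp_affine {ι : Type*} (s : Finset ι) {g g' : ℝ → ℝ}
    (hg : ∀ y, HasDerivAt g (g' y) y) (a b c : ι → ℝ) (x : ℝ) :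
    HasDerivAt (fun x => ∑ i ∈ s, a i * g (b i * x + c i))
      (∑ i ∈ s, a i * b i * g' (b i * x + c i)) x := by
  refine HasDerivAt.fun_sum fun i _ => ?_
  have hlin : HasDerivAt (fun x => b i * x + c i) (b i) x := by
    simpa using ((hasDerivAt_id x).const_mul (b i)).add_const (c i)
  exact (((hg _).comp x hlin).const_mul (a i)).congr_deriv (by ring)

lemma HasDerivAt.eq_zero_of_forall_eq {f : ℝ → ℝ} {f' x : ℝ} (hf : HasDerivAt f f' x)
    (hconst : ∀ y z, f y = f z) : f' = 0 :=
  hf.unique <| (hasDerivAt_const x (f 0)).congr_of_eventuallyEq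
    (Eventually.of_forall fun y => hconst y 0)

lemma tendsto_pow_mul_exp_neg_quadratic (n : ℕ) {ε : ℝ} (hε : 0 < ε) (β γ : ℝ) :
    Tendsto (fun x => x ^ n * exp (-ε * x ^ 2 + β * x + γ)) atTop (𝓝 0) := by
  have hdom : Tendsto (fun x => exp γ * (x ^ n * exp (-x))) atTop (𝓝 0) := by
    simpa using (tendsto_pow_mul_exp_neg_atTop_nhds_zero n).const_mul (exp γ)
  refine squeeze_zero_norm' ?_ hdom
  filter_upwards [eventually_ge_atTop 0, eventually_ge_atTop ((β + 1) / ε)] with x hx0 hxε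
  have hexp : -ε * x ^ 2 + β * x + γ ≤ -x + γ := by
    have := (div_le_iff₀ hε).1 hxε
    nlinarith
  rw [norm_of_nonneg (by positivity), mul_left_comm, ← exp_add]
  exact mul_le_mul_of_nonneg_left (exp_le_exp.2 (by linarith)) (by positivity)

lemma tendsto_quadratic_mul_exp_neg_quadratic (p q r : ℝ) {ε : ℝ} (hε : 0 < ε) (β γ : ℝ) :
    Tendsto (fun x => (p * x ^ 2 + q * x + r) * exp (-ε * x ^ 2 + β * x + γ)) atTop (𝓝 0) := by
  have h := (((tendsto_pow_mul_exp_neg_quadratic 2 hε β γ).const_mul p).add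
    ((tendsto_pow_mul_exp_neg_quadratic 1 hε β γ).const_mul q)).add
    ((tendsto_pow_mul_exp_neg_quadratic 0 hε β γ).const_mul r)
  simp only [mul_zero, add_zero] at h
  convert h using 2 with x
  ring

lemma isLittleO_geluDeriv2_comp_affine {b b' : ℝ} (hb : |b'| < |b|) (c c' : ℝ) :
    (fun x => geluDeriv2 (b * x + c)) =o[atTop] (fun x => stdGaussPDF (b' * x + c')) := by
  rw [isLittleO_iff_tendsto' (Eventually.of_forall fun x hx => absurd hx (stdGaussPDF_pos _).ne')]
  have hε : 0 < (b ^ 2 - b' ^ 2) / 2 := by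
    have := sq_lt_sq.2 hb
    linarith
  refine (tendsto_quadratic_mul_exp_neg_quadratic (-b ^ 2) (-(2 * b * c)) (2 - c ^ 2) hε
    (b' * c' - b * c) ((c' ^ 2 - c ^ 2) / 2)).congr fun x => ?_
  rw [geluDeriv2, mul_div_assoc, stdGaussPDF_div_stdGaussPDF]
  congr 1 <;> ring_nf

lemma tendsto_two_sub_sq_affine_atBot {b : ℝ} (hb : b ≠ 0) (c : ℝ) :
    Tendsto (fun x => 2 - (b * x + c) ^ 2) atTop atBot := by
  have h : Tendsto (fun x => b ^ 2 * (x + c / b) ^ 2) atTop atTop :=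
    ((tendsto_pow_atTop two_ne_zero).comp (tendsto_atTop_add_const_right _ _ tendsto_id)
      ).const_mul_atTop (by positivity)
  refine (tendsto_atBot_add_const_left _ 2 (tendsto_neg_atTop_atBot.comp h)).congr fun x => ?_
  simp only [Function.comp_apply]
  field_simp
  ring

theorem exists_sum_mul_geluDeriv2_ne_zero {ι : Type*} [Fintype ι] (a b c : ι → ℝ)
    (hb : ∀ i j, i ≠ j → |b i| ≠ |b j|) (hk : ∃ k, a k * b k ≠ 0) :
    ∃ x, ∑ i, a i * b i * b i * geluDeriv2 (b i * x + c i) ≠ 0 := by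
  classical
  by_contra! hzero
  obtain ⟨k, hk⟩ := hk
  obtain ⟨j, hj, hjmin⟩ := Finset.exists_min_image {i | a i * b i ≠ 0} (fun i => |b i|)
    ⟨k, by simpa using hk⟩
  simp only [Finset.mem_filter, Finset.mem_univ, true_and] at hj hjmin
  have hrest : (fun x => ∑ i ∈ Finset.univ.erase j, a i * b i * b i * geluDeriv2 (b i * x + c i))
      =o[atTop] fun x => stdGaussPDF (b j * x + c j) := by
    refine IsLittleO.fun_sum fun i hi => ?_
    by_cases hi0 : a i * b i = 0
    · simp [hi0]
    · exact (isLittleO_geluDeriv2_comp_affine ((hjmin i hi0).lt_of_ne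
        (hb j i (Finset.ne_of_mem_erase hi).symm)) _ _).const_mul_left _
  have hmain : (fun x => a j * b j * b j * geluDeriv2 (b j * x + c j))
      =o[atTop] fun x => stdGaussPDF (b j * x + c j) := by
    refine hrest.neg_left.congr_left fun x => ?_
    have := hzero x
    rw [← Finset.add_sum_erase _ _ (Finset.mem_univ j)] at this
    linarith
  have hC : a j * b j * b j ≠ 0 := mul_ne_zero hj (right_ne_zero_of_mul hj)
  have hlim : Tendsto (fun x => 2 - (b j * x + c j) ^ 2) atTop (𝓝 0) := by
    have h := hmain.tendsto_div_nhds_zero.const_mul (a j * b j * b j)⁻¹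
    rw [mul_zero] at h
    refine h.congr fun x => ?_
    rw [geluDeriv2, ← mul_assoc, mul_div_assoc, div_self (stdGaussPDF_pos _).ne', mul_one,
      inv_mul_cancel_left₀ hC]
  exact not_tendsto_nhds_of_tendsto_atBot
    (tendsto_two_sub_sq_affine_atBot (right_ne_zero_of_mul hj) _) 0 hlim

theorem stmt_10_general (m : ℕ) (a b c : Fin m → ℝ)
    (hb : ∀ i j, i ≠ j → |b i| ≠ |b j|)
    (hk : ∃ k, a k * b k ≠ 0) :
    ∃ x y : ℝ,
      (∑ i, a i * gelu (b i * x + c i)) ≠ (∑ i, a i * gelu (b i * y + c i)) := by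
  by_contra! hconst
  have hF' : ∀ x, ∑ i, a i * b i * geluDeriv (b i * x + c i) = 0 := fun x =>
    (hasDerivAt_sum_comp_affine _ hasDerivAt_gelu a b c x).eq_zero_of_forall_eq hconst
  obtain ⟨x, hx⟩ := exists_sum_mul_geluDeriv2_ne_zero a b c hb hk
  exact hx <| (hasDerivAt_sum_comp_affine _ hasDerivAt_geluDeriv (fun i => a i * b i) b c x
    ).eq_zero_of_forall_eq fun y z => by rw [hF', hF']

/-- A nontrivial finite linear combination of GeLUs with slopes of pairwise
distinct absolute values is not a constant function. -/
theorem stmt_10 (m : ℕ) (hm : 0 < m) (a b c : Fin m → ℝ)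
    (hb : ∀ i j, i ≠ j → |b i| ≠ |b j|)
    (hk : ∃ k, a k * b k ≠ 0) :
    ∃ x y : ℝ,
      (∑ i, a i * gelu (b i * x + c i)) ≠ (∑ i, a i * gelu (b i * y + c i)) :=
  stmt_10_general m a b c hb hk
end

section
/- Let softplus(x) = log(1 + exp(x)). Let m be a positive integer and a_1,…,a_m, b_1,…,b_m, c_1,…,c_m real numbers such that |b_i| ≠ |b_j| whenever i ≠ j, and such that a_k·b_k ≠ 0 for some k. Then the function f(x) = Σ_{i=1}^m a_i softplus(b_i x + c_i) is not constant on ℝ; that is, there exist x, y ∈ ℝ with f(x) ≠ f(y). -/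
/-!
For `b ≠ 0`, `softplus (b x + c)` is an affine function of `x` plus `softplus (-(|b| x + e))`
(use `softplus t = t + softplus (-t)` when `b > 0`), and `softplus (-y) ~ exp (-y)` as `y → ∞`.
If the combination were constant, the sum of these remainders, which tends to `0`, would be an
affine function, hence identically `0`. Multiply it by `exp (d x)`, where `d` is the smallest `|bᵢ|`
with `aᵢ ≠ 0`: as `x → ∞` the `i`-th term tends to `aᵢ exp (-eᵢ) ≠ 0`, and all others to `0`
because the `|bⱼ|` are distinct.
-/

noncomputable def softplus (x : ℝ) : ℝ := Real.log (1 + Real.exp x)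

open Filter Real Topology Finset

theorem softplus_eq_add_softplus_neg (t : ℝ) : softplus t = t + softplus (-t) := by
  have h : 1 + exp t = exp t * (1 + exp (-t)) := by
    rw [mul_add, mul_one, ← exp_add, add_neg_cancel, exp_zero, add_comm]
  rw [softplus, h, log_mul (exp_ne_zero t) (by positivity), log_exp, softplus]

theorem softplus_eq_ite_add_softplus_neg_sign_mul {b : ℝ} (hb : b ≠ 0) (t : ℝ) :
    softplus t = (if 0 < b then t else 0) + softplus (-(SignType.sign b * t)) := by
  rcases hb.lt_or_gt with hb | hb
  · simp [hb, hb.not_gt]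
  · simpa [hb] using softplus_eq_add_softplus_neg t

theorem tendsto_softplus_neg_div_exp_neg :
    Tendsto (fun y => softplus (-y) / exp (-y)) atTop (𝓝 1) := by
  have hslope := (hasDerivAt_log one_ne_zero).tendsto_slope_zero
  have hexp : Tendsto (fun y => exp (-y)) atTop (𝓝[≠] 0) :=
    tendsto_nhdsWithin_iff.2 ⟨tendsto_exp_neg_atTop_nhds_zero, .of_forall fun y => exp_ne_zero _⟩
  simpa [softplus, div_eq_inv_mul, Function.comp_def] using hslope.comp hexp

theorem tendsto_softplus_neg_mul_exp {d d₀ e l : ℝ} (hd : 0 < d)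
    (h : Tendsto (fun x => exp ((d₀ - d) * x - e)) atTop (𝓝 l)) :
    Tendsto (fun x => softplus (-(d * x + e)) * exp (d₀ * x)) atTop (𝓝 l) := by
  have hy : Tendsto (fun x => d * x + e) atTop atTop :=
    tendsto_atTop_add_const_right _ e (tendsto_id.const_mul_atTop hd)
  have := (tendsto_softplus_neg_div_exp_neg.comp hy).mul h
  rw [one_mul] at this
  refine this.congr fun x => ?_
  rw [Function.comp_apply, show (d₀ - d) * x - e = -(d * x + e) + d₀ * x by ring, exp_add]
  field_simp

theorem tendsto_softplus_neg_mul_exp_self {d : ℝ} (hd : 0 < d) (e : ℝ) :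
    Tendsto (fun x => softplus (-(d * x + e)) * exp (d * x)) atTop (𝓝 (exp (-e))) :=
  tendsto_softplus_neg_mul_exp hd (by simp)

theorem tendsto_softplus_neg_mul_exp_of_lt {d d₀ : ℝ} (hd : 0 < d) (hlt : d₀ < d) (e : ℝ) :
    Tendsto (fun x => softplus (-(d * x + e)) * exp (d₀ * x)) atTop (𝓝 0) := by
  refine tendsto_softplus_neg_mul_exp hd (tendsto_exp_atBot.comp ?_)
  simp_rw [sub_eq_add_neg _ e]
  exact tendsto_atBot_add_const_right _ _
    (tendsto_id.const_mul_atTop_of_neg (sub_neg.2 hlt))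

theorem tendsto_softplus_neg_mul_add {d : ℝ} (hd : 0 < d) (e : ℝ) :
    Tendsto (fun x => softplus (-(d * x + e))) atTop (𝓝 0) := by
  simpa using tendsto_softplus_neg_mul_exp_of_lt hd hd e

theorem eq_zero_of_tendsto_mul_add {L D : ℝ} (h : Tendsto (fun x => L * x + D) atTop (𝓝 0)) :
    L = 0 ∧ D = 0 := by
  have hshift := (h.comp (tendsto_atTop_add_const_right _ 1 tendsto_id)).sub h
  rw [sub_zero] at hshift
  have hL : L = 0 := tendsto_nhds_unique tendsto_const_nhds <| hshift.congr fun x => by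
    simp only [Function.comp_apply, id]
    ring
  subst hL
  exact ⟨rfl, tendsto_nhds_unique tendsto_const_nhds (h.congr fun x => by ring)⟩

theorem eq_zero_of_sum_mul_softplus_neg_eventually_eq_zero {ι : Type*} {s : Finset ι}
    {α d e : ι → ℝ} (hd : ∀ i ∈ s, 0 < d i) (hinj : Set.InjOn d s)
    (h : ∀ᶠ x in atTop, ∑ i ∈ s, α i * softplus (-(d i * x + e i)) = 0) :
    ∀ i ∈ s, α i = 0 := by
  classical
  by_contra! hne
  obtain ⟨i₀, hi₀, hmin⟩ := (s.filter (α · ≠ 0)).exists_min_image d <| by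
    obtain ⟨i, hi, hαi⟩ := hne
    exact ⟨i, mem_filter.2 ⟨hi, hαi⟩⟩
  rw [mem_filter] at hi₀
  have hterm : ∀ i ∈ s, Tendsto (fun x => α i * softplus (-(d i * x + e i)) * exp (d i₀ * x))
      atTop (𝓝 (if i = i₀ then α i₀ * exp (-e i₀) else 0)) := by
    intro i hi
    by_cases hαi : α i = 0
    · have : i ≠ i₀ := by rintro rfl; exact hi₀.2 hαi
      simp [hαi, this]
    split_ifs with hii₀
    · subst hii₀
      simpa [mul_assoc] using (tendsto_softplus_neg_mul_exp_self (hd i hi) (e i)).const_mul (α i)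
    · have hlt : d i₀ < d i := (hmin i (mem_filter.2 ⟨hi, hαi⟩)).lt_of_ne
        fun heq => hii₀ (hinj hi hi₀.1 heq.symm)
      simpa [mul_assoc] using
        (tendsto_softplus_neg_mul_exp_of_lt (hd i hi) hlt (e i)).const_mul (α i)
  have hlim := tendsto_finsetSum s hterm
  rw [sum_ite_eq' s i₀, if_pos hi₀.1] at hlim
  have hzero : Tendsto (fun x => ∑ i ∈ s, α i * softplus (-(d i * x + e i)) * exp (d i₀ * x))
      atTop (𝓝 0) :=
    tendsto_const_nhds.congr' <| h.mono fun x hx => by simp only [← sum_mul, hx, zero_mul]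
  exact mul_ne_zero hi₀.2 (exp_ne_zero _) (tendsto_nhds_unique hlim hzero)

theorem exists_sum_mul_softplus_eq_affine_add {ι : Type*} [Fintype ι] (a b c : ι → ℝ) :
    ∃ L D : ℝ, ∀ x, ∑ i, a i * softplus (b i * x + c i) =
      L * x + D + ∑ i ∈ univ.filter (b · ≠ 0),
        a i * softplus (-(|b i| * x + SignType.sign (b i) * c i)) := by
  refine ⟨∑ i, a i * (if 0 < b i then b i else 0),
    ∑ i, a i * (if b i = 0 then softplus (c i) else if 0 < b i then c i else 0), fun x => ?_⟩
  rw [sum_filter, sum_mul, ← sum_add_distrib, ← sum_add_distrib]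
  refine sum_congr rfl fun i _ => ?_
  by_cases hbi : b i = 0
  · simp [hbi]
  · have hres : |b i| * x + SignType.sign (b i) * c i = SignType.sign (b i) * (b i * x + c i) := by
      rw [mul_add, ← mul_assoc, sign_mul_self]
    rw [softplus_eq_ite_add_softplus_neg_sign_mul hbi, hres]
    split_ifs <;> ring

theorem stmt_18_general (m : ℕ) (a b c : Fin m → ℝ)
    (hb : ∀ i j, i ≠ j → |b i| ≠ |b j|)
    (hk : ∃ k, a k * b k ≠ 0) :
    ∃ x y : ℝ,
      (∑ i, a i * softplus (b i * x + c i)) ≠ (∑ i, a i * softplus (b i * y + c i)) := by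
  by_contra! hconst
  obtain ⟨L, D, hF⟩ := exists_sum_mul_softplus_eq_affine_add a b c
  have hpos : ∀ i ∈ univ.filter (b · ≠ 0), 0 < |b i| := fun i hi => abs_pos.2 (mem_filter.1 hi).2
  have hres_lim := tendsto_finsetSum _ fun i hi =>
    (tendsto_softplus_neg_mul_add (hpos i hi) (SignType.sign (b i) * c i)).const_mul (a i)
  simp only [mul_zero, sum_const_zero] at hres_lim
  have hres_eq : ∀ x, ∑ i ∈ univ.filter (b · ≠ 0),
      a i * softplus (-(|b i| * x + SignType.sign (b i) * c i)) =
        -L * x + (∑ i, a i * softplus (b i * 0 + c i) - D) := fun x => by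
    linarith [hF x, hconst x 0]
  obtain ⟨hL, hD⟩ := eq_zero_of_tendsto_mul_add (hres_lim.congr hres_eq)
  have hres_zero : ∀ᶠ x in atTop, ∑ i ∈ univ.filter (b · ≠ 0),
      a i * softplus (-(|b i| * x + SignType.sign (b i) * c i)) = 0 := .of_forall fun x => by
    rw [hres_eq, hL, hD, zero_mul, add_zero]
  obtain ⟨k, hk⟩ := hk
  exact left_ne_zero_of_mul hk <| eq_zero_of_sum_mul_softplus_neg_eventually_eq_zero hpos
    (fun i _ j _ hij => by_contra fun hne => hb i j hne hij) hres_zero k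
    (mem_filter.2 ⟨mem_univ k, right_ne_zero_of_mul hk⟩)

/-- A nontrivial finite linear combination of softplus functions with slopes of
pairwise distinct absolute values is not a constant function. -/
theorem stmt_18 (m : ℕ) (hm : 0 < m) (a b c : Fin m → ℝ)
    (hb : ∀ i j, i ≠ j → |b i| ≠ |b j|)
    (hk : ∃ k, a k * b k ≠ 0) :
    ∃ x y : ℝ,
      (∑ i, a i * softplus (b i * x + c i)) ≠ (∑ i, a i * softplus (b i * y + c i)) :=
  stmt_18_general m a b c hb hk
end
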